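/- arXiv:1910.06405 — 2 statements merged into one kernel-verified Lean document; each statement's English description precedes it below -/
import Mathlib

section
/- For every m ≥ 2, the join of the complete graph on m vertices with the edgeless graph on m vertices satisfies gcol(K_m ∨ K̄_m) = 2m − 1. In particular, gcol(K_2 ∨ K̄_2) = 3. -/
open scoped Classical

/-- The number of backneighbors of `v` with respect to the ordering `τ`:
neighbors of `v` in `G` that appear (strictly) before `v` in `τ`. -/
noncomputable def backDeg {V : Type*} [Fintype V] (G : SimpleGraph V)
    (τ : List V) (v : V) : ℕ :=
  (Finset.univ.filter (fun u =>
    G.Adj v u ∧ ∃ i j : Fin τ.length, i < j ∧ τ.get i = u ∧ τ.get j = v)).card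

/-- `col(G, τ)`: the maximum over all vertices `v` of
`1 +` (the number of backneighbors of `v` with respect to `τ`). -/
noncomputable def colOrd {V : Type*} [Fintype V] (G : SimpleGraph V)
    (τ : List V) : ℕ :=
  Finset.univ.sup (fun v => 1 + backDeg G τ v)

/-- The minimax value of the ordering game on `G` continued from the position
(partial ordering) `σ`, where `alice = true` means it is Alice's turn to choose
an unchosen vertex (Alice minimizes the final score `colOrd G τ`, Bob
maximizes it).  This value is the least `s` such that the player-to-move's
opponent-robust guarantee holds, i.e. the least `s` such that Alice has a
strategy from this position guaranteeing a score of at most `s`. -/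
noncomputable def gameVal {V : Type*} [Fintype V] (G : SimpleGraph V)
    (alice : Bool) (σ : List V) : ℕ :=
  if h : (Finset.univ.filter (fun v : V => v ∉ σ)).Nonempty then
    if alice then
      (Finset.univ.filter (fun v : V => v ∉ σ)).attach.inf'
        (Finset.attach_nonempty_iff.mpr h)
        (fun v => gameVal G false (σ ++ [v.1]))
    else
      (Finset.univ.filter (fun v : V => v ∉ σ)).attach.sup'
        (Finset.attach_nonempty_iff.mpr h)
        (fun v => gameVal G true (σ ++ [v.1]))
  else colOrd G σ
termination_by (Finset.univ.filter (fun v : V => v ∉ σ)).card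
decreasing_by
  all_goals {
    have hv : ↑v ∉ σ := (Finset.mem_filter.mp v.2).2
    apply Finset.card_lt_card
    constructor
    · intro u hu
      simp only [Finset.mem_filter, List.mem_append] at hu ⊢
      exact ⟨hu.1, fun h' => hu.2 (Or.inl h')⟩
    · intro hsub
      have := hsub (Finset.mem_filter.mpr ⟨Finset.mem_univ _, hv⟩)
      simp at this }

/-- The game coloring number of `G`: the value of the ordering game on `G`
with Alice moving first (also written `gcol_A`). -/
noncomputable def gcol {V : Type*} [Fintype V] (G : SimpleGraph V) : ℕ :=
  gameVal G true []

/-- The value of the Bob ordering game on `G` (Bob moves first). -/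
noncomputable def gcolB {V : Type*} [Fintype V] (G : SimpleGraph V) : ℕ :=
  gameVal G false []

/-- The `σ`-game coloring number of `G`: the value of the `σ`-preordered
ordering game, in which Alice moves first if `|σ|` is even and Bob moves
first if `|σ|` is odd. -/
noncomputable def sigmaGcol {V : Type*} [Fintype V] (G : SimpleGraph V)
    (σ : List V) : ℕ :=
  if Even σ.length then gameVal G true σ else gameVal G false σ

/-- The Alice `σ`-game coloring number: the value of the `σ`-preordered game
in which Alice moves first. -/
noncomputable def sigmaGcolA {V : Type*} [Fintype V] (G : SimpleGraph V)
    (σ : List V) : ℕ :=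
  gameVal G true σ

/-- The Bob `σ`-game coloring number: the value of the `σ`-preordered game
in which Bob moves first. -/
noncomputable def sigmaGcolB {V : Type*} [Fintype V] (G : SimpleGraph V)
    (σ : List V) : ℕ :=
  gameVal G false σ

/-- The join `K_n ∨ K̄_m` of the complete graph on `n` vertices with the
edgeless graph on `m` vertices: the `K_n`-part vertices are pairwise adjacent,
the `K̄_m`-part vertices are pairwise nonadjacent, and every `K_n`-part vertex
is adjacent to every `K̄_m`-part vertex. -/
def joinKE (n m : ℕ) : SimpleGraph (Fin n ⊕ Fin m) where
  Adj x y := x ≠ y ∧ (x.isLeft ∨ y.isLeft)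
  symm := ⟨fun _ _ h => ⟨h.1.symm, h.2.symm⟩⟩
  loopless := ⟨fun _ h => h.1 rfl⟩

section Generic
variable {V : Type*} [Fintype V] (G : SimpleGraph V)

lemma gameVal_le_of_inv (s : ℕ) (P : Bool → List V → Prop)
    (hA : ∀ σ, P true σ → (Finset.univ.filter (fun v : V => v ∉ σ)).Nonempty →
      ∃ v, v ∉ σ ∧ P false (σ ++ [v]))
    (hB : ∀ σ, P false σ → ∀ v : V, v ∉ σ → P true (σ ++ [v]))
    (hend : ∀ b σ, P b σ → ¬(Finset.univ.filter (fun v : V => v ∉ σ)).Nonempty →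
      colOrd G σ ≤ s) :
    ∀ b σ, P b σ → gameVal G b σ ≤ s := by
  have key : ∀ n (b : Bool) (σ : List V),
      (Finset.univ.filter (fun v : V => v ∉ σ)).card ≤ n → P b σ → gameVal G b σ ≤ s := by
    intro n
    induction n with
    | zero =>
      intro b σ hc hP
      have hne : ¬(Finset.univ.filter (fun v : V => v ∉ σ)).Nonempty := by
        rw [Finset.nonempty_iff_ne_empty]
        simp only [ne_eq, not_not]
        exact Finset.card_eq_zero.mp (Nat.le_zero.mp hc)
      rw [gameVal, dif_neg hne]
      exact hend b σ hP hne
    | succ n ih =>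
      intro b σ hc hP
      rw [gameVal]
      by_cases h : (Finset.univ.filter (fun v : V => v ∉ σ)).Nonempty
      · rw [dif_pos h]
        have hcard : ∀ v : V, v ∉ σ →
            (Finset.univ.filter (fun u : V => u ∉ σ ++ [v])).card ≤ n := by
          intro v hv
          have hlt : (Finset.univ.filter (fun u : V => u ∉ σ ++ [v])).card
              < (Finset.univ.filter (fun u : V => u ∉ σ)).card := by
            apply Finset.card_lt_card
            constructor
            · intro u hu
              simp only [Finset.mem_filter, List.mem_append] at hu ⊢
              exact ⟨hu.1, fun h' => hu.2 (Or.inl h')⟩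
            · intro hsub
              have := hsub (Finset.mem_filter.mpr ⟨Finset.mem_univ _, hv⟩)
              simp at this
          omega
        cases b with
        | true =>
          obtain ⟨v, hv, hPv⟩ := hA σ hP h
          rw [if_pos rfl]
          exact Finset.inf'_le_of_le _ (b := (⟨v, by simp [hv]⟩ :
            {x // x ∈ Finset.univ.filter (fun v : V => v ∉ σ)}))
            (Finset.mem_attach _ _) (ih false _ (hcard v hv) hPv)
        | false =>
          simp only [Bool.false_eq_true, if_false]
          apply Finset.sup'_le
          intro v _
          have hv : ↑v ∉ σ := (Finset.mem_filter.mp v.2).2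
          exact ih true _ (hcard v hv) (hB σ hP v hv)
      · rw [dif_neg h]
        exact hend b σ hP h
  intro b σ hP
  exact key _ b σ le_rfl hP

lemma le_gameVal_of_inv (s : ℕ) (Q : Bool → List V → Prop)
    (hA : ∀ σ, Q true σ → ∀ v : V, v ∉ σ → Q false (σ ++ [v]))
    (hB : ∀ σ, Q false σ → (Finset.univ.filter (fun v : V => v ∉ σ)).Nonempty →
      ∃ v, v ∉ σ ∧ Q true (σ ++ [v]))
    (hend : ∀ b σ, Q b σ → ¬(Finset.univ.filter (fun v : V => v ∉ σ)).Nonempty →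
      s ≤ colOrd G σ) :
    ∀ b σ, Q b σ → s ≤ gameVal G b σ := by
  have key : ∀ n (b : Bool) (σ : List V),
      (Finset.univ.filter (fun v : V => v ∉ σ)).card ≤ n → Q b σ → s ≤ gameVal G b σ := by
    intro n
    induction n with
    | zero =>
      intro b σ hc hQ
      have hne : ¬(Finset.univ.filter (fun v : V => v ∉ σ)).Nonempty := by
        rw [Finset.nonempty_iff_ne_empty]
        simp only [ne_eq, not_not]
        exact Finset.card_eq_zero.mp (Nat.le_zero.mp hc)
      rw [gameVal, dif_neg hne]
      exact hend b σ hQ hne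
    | succ n ih =>
      intro b σ hc hQ
      rw [gameVal]
      by_cases h : (Finset.univ.filter (fun v : V => v ∉ σ)).Nonempty
      · rw [dif_pos h]
        have hcard : ∀ v : V, v ∉ σ →
            (Finset.univ.filter (fun u : V => u ∉ σ ++ [v])).card ≤ n := by
          intro v hv
          have hlt : (Finset.univ.filter (fun u : V => u ∉ σ ++ [v])).card
              < (Finset.univ.filter (fun u : V => u ∉ σ)).card := by
            apply Finset.card_lt_card
            constructor
            · intro u hu
              simp only [Finset.mem_filter, List.mem_append] at hu ⊢
              exact ⟨hu.1, fun h' => hu.2 (Or.inl h')⟩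
            · intro hsub
              have := hsub (Finset.mem_filter.mpr ⟨Finset.mem_univ _, hv⟩)
              simp at this
          omega
        cases b with
        | true =>
          rw [if_pos rfl]
          apply Finset.le_inf'
          intro v _
          have hv : ↑v ∉ σ := (Finset.mem_filter.mp v.2).2
          exact ih false _ (hcard v hv) (hA σ hQ v hv)
        | false =>
          obtain ⟨v, hv, hQv⟩ := hB σ hQ h
          simp only [Bool.false_eq_true, if_false]
          apply Finset.le_sup'_of_le _ (b := (⟨v, by simp [hv]⟩ :
            {x // x ∈ Finset.univ.filter (fun v : V => v ∉ σ)}))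
          · exact Finset.mem_attach _ _
          · exact ih true _ (hcard v hv) hQv
      · rw [dif_neg h]
        exact hend b σ hQ h
  intro b σ hQ
  exact key _ b σ le_rfl hQ

end Generic
section Helpers
variable {V : Type*} [Fintype V]

lemma backDeg_le_index (G : SimpleGraph V) (τ : List V) (hτ : τ.Nodup)
    (j : Fin τ.length) : backDeg G τ (τ.get j) ≤ (j : ℕ) := by
  unfold backDeg
  have hsub : (Finset.univ.filter (fun u =>
      G.Adj (τ.get j) u ∧ ∃ i j' : Fin τ.length, i < j' ∧ τ.get i = u ∧ τ.get j' = τ.get j))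
      ⊆ (τ.take j).toFinset := by
    intro u hu
    rw [Finset.mem_filter] at hu
    obtain ⟨-, -, i, j', hij, hi, hj⟩ := hu
    have hjj : j' = j := hτ.get_inj_iff.mp hj
    rw [hjj] at hij
    rw [List.mem_toFinset]
    have hilen : (i : ℕ) < (τ.take j).length := by
      simp only [List.length_take]
      have := i.2
      omega
    have : (τ.take (j : ℕ))[(i : ℕ)]'hilen = u := by
      rw [List.getElem_take]
      exact hi
    rw [← this]
    exact List.getElem_mem _
  calc _ ≤ (τ.take j).toFinset.card := Finset.card_le_card hsub
    _ ≤ (τ.take j).length := (τ.take j).toFinset_card_le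
    _ ≤ (j : ℕ) := by simp [List.length_take]

lemma index_le_backDeg (G : SimpleGraph V) (τ : List V) (hτ : τ.Nodup)
    (j : Fin τ.length)
    (hadj : ∀ i : Fin τ.length, i < j → G.Adj (τ.get j) (τ.get i)) :
    (j : ℕ) ≤ backDeg G τ (τ.get j) := by
  unfold backDeg
  have hlen : (τ.take j).length = (j : ℕ) := by simp only [List.length_take]; omega
  have hsub : (τ.take j).toFinset ⊆ (Finset.univ.filter (fun u =>
      G.Adj (τ.get j) u ∧ ∃ i j' : Fin τ.length, i < j' ∧ τ.get i = u ∧ τ.get j' = τ.get j)) := by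
    intro u hu
    rw [List.mem_toFinset, List.mem_iff_get] at hu
    obtain ⟨k, hk⟩ := hu
    have hkj : (k : ℕ) < (j : ℕ) := by
      have h2 := k.2
      simp only [List.length_take] at h2
      omega
    have hkτ : (k : ℕ) < τ.length := lt_trans hkj j.2
    have hget : τ.get ⟨k, hkτ⟩ = u := by
      rw [← hk]
      simp only [List.get_eq_getElem, List.getElem_take]
      
    rw [Finset.mem_filter]
    refine ⟨Finset.mem_univ _, ?_, ⟨k, hkτ⟩, j, hkj, hget, rfl⟩
    rw [← hget]
    exact hadj _ hkj
  calc (j : ℕ) = (τ.take j).length := hlen.symm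
    _ = (τ.take j).toFinset.card :=
        (List.toFinset_card_of_nodup ((List.take_sublist _ τ).nodup hτ)).symm
    _ ≤ _ := Finset.card_le_card hsub

lemma backDeg_le_nbr_card (G : SimpleGraph V) (τ : List V) (v : V) :
    backDeg G τ v ≤ (Finset.univ.filter (fun u => G.Adj v u)).card := by
  apply Finset.card_le_card
  intro u hu
  rw [Finset.mem_filter] at hu ⊢
  exact ⟨hu.1, hu.2.1⟩

lemma colOrd_le_iff (G : SimpleGraph V) (τ : List V) (s : ℕ) :
    colOrd G τ ≤ s ↔ ∀ v : V, 1 + backDeg G τ v ≤ s := by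
  unfold colOrd
  rw [Finset.sup_le_iff]
  simp

lemma le_colOrd (G : SimpleGraph V) (τ : List V) (v : V) :
    1 + backDeg G τ v ≤ colOrd G τ :=
  Finset.le_sup (f := fun v => 1 + backDeg G τ v) (Finset.mem_univ v)

lemma countP_le_card (p : V → Bool) (σ : List V) (hσ : σ.Nodup) :
    σ.countP p ≤ (Finset.univ.filter (fun v => p v = true)).card := by
  rw [List.countP_eq_length_filter, ← List.toFinset_card_of_nodup (hσ.filter p)]
  apply Finset.card_le_card
  intro u hu
  rw [List.toFinset_filter, Finset.mem_filter] at hu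
  rw [Finset.mem_filter]
  exact ⟨Finset.mem_univ _, hu.2⟩

lemma all_mem_of_countP_eq (p : V → Bool) (σ : List V) (hσ : σ.Nodup)
    (h : σ.countP p = (Finset.univ.filter (fun v => p v = true)).card) :
    ∀ v : V, p v = true → v ∈ σ := by
  have h1 : (σ.filter p).toFinset ⊆ Finset.univ.filter (fun v => p v = true) := by
    intro u hu
    rw [List.toFinset_filter, Finset.mem_filter] at hu
    rw [Finset.mem_filter]
    exact ⟨Finset.mem_univ _, hu.2⟩
  have h2 : (σ.filter p).toFinset.card = (Finset.univ.filter (fun v => p v = true)).card := by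
    rw [List.toFinset_card_of_nodup (hσ.filter p), ← List.countP_eq_length_filter, h]
  have := Finset.eq_of_subset_of_card_le h1 (le_of_eq h2.symm)
  intro v hv
  have : v ∈ (σ.filter p).toFinset := by
    rw [this, Finset.mem_filter]; exact ⟨Finset.mem_univ _, hv⟩
  rw [List.mem_toFinset, List.mem_filter] at this
  exact this.1

lemma countP_eq_of_all_mem (p : V → Bool) (σ : List V) (hσ : σ.Nodup)
    (h : ∀ v : V, p v = true → v ∈ σ) :
    σ.countP p = (Finset.univ.filter (fun v => p v = true)).card := by
  rw [List.countP_eq_length_filter, ← List.toFinset_card_of_nodup (hσ.filter p)]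
  congr 1
  ext u
  rw [List.toFinset_filter, Finset.mem_filter, Finset.mem_filter, List.mem_toFinset]
  constructor
  · rintro ⟨-, hu⟩; exact ⟨Finset.mem_univ _, hu⟩
  · rintro ⟨-, hu⟩; exact ⟨h u hu, hu⟩

omit [Fintype V] in
lemma nodup_append_single (σ : List V) (v : V) (hσ : σ.Nodup) (hv : v ∉ σ) :
    (σ ++ [v]).Nodup := by
  rw [List.nodup_append]
  refine ⟨hσ, List.nodup_singleton v, ?_⟩
  intro u hu w hw
  rw [List.mem_singleton] at hw
  subst hw
  rintro rfl
  exact hv hu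

end Helpers

section JoinHelpers

lemma card_isLeft (n k : ℕ) :
    (Finset.univ.filter (fun x : Fin n ⊕ Fin k => x.isLeft = true)).card = n := by
  have : (Finset.univ.filter (fun x : Fin n ⊕ Fin k => x.isLeft = true))
      = Finset.univ.map ⟨Sum.inl, Sum.inl_injective⟩ := by
    ext x
    cases x <;> simp
  rw [this, Finset.card_map, Finset.card_univ, Fintype.card_fin]

lemma card_isRight (n k : ℕ) :
    (Finset.univ.filter (fun x : Fin n ⊕ Fin k => x.isRight = true)).card = k := by
  have : (Finset.univ.filter (fun x : Fin n ⊕ Fin k => x.isRight = true))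
      = Finset.univ.map ⟨Sum.inr, Sum.inr_injective⟩ := by
    ext x
    cases x <;> simp
  rw [this, Finset.card_map, Finset.card_univ, Fintype.card_fin]

lemma joinKE_adj_of_isLeft {n k : ℕ} (v u : Fin n ⊕ Fin k)
    (hv : v.isLeft = true) (hne : v ≠ u) : (joinKE n k).Adj v u :=
  (show v ≠ u ∧ (v.isLeft = true ∨ u.isLeft = true) from ⟨hne, Or.inl hv⟩)

lemma joinKE_isLeft_of_adj_right {n k : ℕ} (v u : Fin n ⊕ Fin k)
    (hv : v.isRight = true) (h : (joinKE n k).Adj v u) : u.isLeft = true := by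
  rcases (h : v ≠ u ∧ (v.isLeft = true ∨ u.isLeft = true)) with ⟨-, h | h⟩
  · rw [Sum.isRight_iff] at hv
    obtain ⟨b, rfl⟩ := hv
    simp at h
  · exact h

end JoinHelpers
section Main

lemma countP_snoc {α : Type*} (p : α → Bool) (σ : List α) (v : α) :
    (σ ++ [v]).countP p = σ.countP p + (bif p v then 1 else 0) := by
  cases h : p v <;> simp [List.countP_append, List.countP_cons, h]

lemma idx_cond_append {m : ℕ} (σ : List (Fin m ⊕ Fin m)) (v : Fin m ⊕ Fin m)
    (hσ : ∀ j : Fin σ.length, (σ.get j).isLeft = true → (j : ℕ) + 2 ≤ 2 * m)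
    (hv : v.isLeft = true → σ.length + 2 ≤ 2 * m) :
    ∀ j : Fin (σ ++ [v]).length, ((σ ++ [v]).get j).isLeft = true → (j : ℕ) + 2 ≤ 2 * m := by
  intro j hj
  rcases lt_or_ge (j : ℕ) σ.length with h | h
  · have he : (σ ++ [v]).get j = σ.get ⟨j, h⟩ := by
      simp only [List.get_eq_getElem]
      exact List.getElem_append_left h
    rw [he] at hj
    exact hσ ⟨j, h⟩ hj
  · have hje : (j : ℕ) = σ.length := by
      have := j.2
      simp only [List.length_append, List.length_singleton] at this
      omega
    have he : (σ ++ [v]).get j = v := by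
      simp only [List.get_eq_getElem]
      exact List.getElem_concat_length (l := σ) (a := v) hje _
    rw [he] at hj
    rw [hje]
    exact hv hj

/-- Alice's invariant for the upper bound. -/
def PA (m : ℕ) (b : Bool) (σ : List (Fin m ⊕ Fin m)) : Prop :=
  σ.Nodup ∧
  (σ.countP (fun v => v.isLeft) = m ∨
    σ.length + (bif b then 0 else 1) ≤ 2 * σ.countP (fun v => v.isLeft)) ∧
  (∀ j : Fin σ.length, (σ.get j).isLeft = true → (j : ℕ) + 2 ≤ 2 * m)

lemma PA_A (m : ℕ) : ∀ σ : List (Fin m ⊕ Fin m), PA m true σ →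
    (∃ u : Fin m ⊕ Fin m, u ∉ σ) →
    ∃ v, v ∉ σ ∧ PA m false (σ ++ [v]) := by
  rintro σ ⟨hnd, hcnt, hidx⟩ hne
  rcases Classical.em (∃ w : Fin m ⊕ Fin m, w.isLeft = true ∧ w ∉ σ) with hex | hex
  · obtain ⟨w, hwl, hw⟩ := hex
    have hltm : σ.countP (fun v => v.isLeft) ≠ m := by
      intro h
      exact hw (all_mem_of_countP_eq _ σ hnd (by rw [h, card_isLeft]) w hwl)
    have hlem : σ.countP (fun v => v.isLeft) ≤ m := by
      have := countP_le_card (fun v : Fin m ⊕ Fin m => v.isLeft) σ hnd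
      rwa [card_isLeft] at this
    have hle : σ.length ≤ 2 * σ.countP (fun v => v.isLeft) := by
      rcases hcnt with h | h
      · exact absurd h hltm
      · simpa using h
    refine ⟨w, hw, nodup_append_single σ w hnd hw, ?_, ?_⟩
    · right
      rw [countP_snoc, hwl]
      simp only [List.length_append, List.length_singleton, cond_true, cond_false]
      omega
    · refine idx_cond_append σ w hidx (fun _ => ?_)
      omega
  · push_neg at hex
    obtain ⟨v, hvmem⟩ := hne
    have hvl : v.isLeft = false := by
      cases h : v.isLeft
      · rfl
      · exact absurd (hex v h) hvmem
    have hall : σ.countP (fun v => v.isLeft) = m := by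
      rw [countP_eq_of_all_mem (fun v : Fin m ⊕ Fin m => v.isLeft) σ hnd hex, card_isLeft]
    refine ⟨v, hvmem, nodup_append_single σ v hnd hvmem, Or.inl ?_,
      idx_cond_append σ v hidx (fun h => by rw [hvl] at h; exact absurd h (by simp))⟩
    rw [countP_snoc, hvl, hall]
    simp

lemma PA_B (m : ℕ) : ∀ σ : List (Fin m ⊕ Fin m), PA m false σ →
    ∀ v : Fin m ⊕ Fin m, v ∉ σ → PA m true (σ ++ [v]) := by
  rintro σ ⟨hnd, hcnt, hidx⟩ v hv
  have hlem : σ.countP (fun v => v.isLeft) ≤ m := by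
    have := countP_le_card (fun v : Fin m ⊕ Fin m => v.isLeft) σ hnd
    rwa [card_isLeft] at this
  have hvcase : v.isLeft = true → σ.countP (fun v => v.isLeft) ≠ m := by
    intro hvl h
    exact hv (all_mem_of_countP_eq _ σ hnd (by rw [h, card_isLeft]) v hvl)
  refine ⟨nodup_append_single σ v hnd hv, ?_, ?_⟩
  · rcases hcnt with h | h
    · left
      rw [countP_snoc, h]
      have : v.isLeft = false := by
        cases hb : v.isLeft
        · rfl
        · exact absurd h (hvcase hb)
      rw [this]
      simp
    · right
      simp only [cond_false] at h
      rw [countP_snoc]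
      simp only [List.length_append, List.length_singleton, cond_true]
      cases hb : v.isLeft <;> simp <;> omega
  · refine idx_cond_append σ v hidx (fun hvl => ?_)
    have h1 := hvcase hvl
    rcases hcnt with h | h
    · exact absurd h h1
    · simp only [cond_false] at h
      omega

lemma length_of_full {m : ℕ} (σ : List (Fin m ⊕ Fin m)) (hnd : σ.Nodup)
    (hfull : ∀ v : Fin m ⊕ Fin m, v ∈ σ) : σ.length = 2 * m := by
  have h1 : σ.toFinset = Finset.univ :=
    Finset.eq_univ_of_forall (fun v => List.mem_toFinset.mpr (hfull v))
  have h2 := List.toFinset_card_of_nodup hnd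
  rw [h1, Finset.card_univ, Fintype.card_sum, Fintype.card_fin] at h2
  omega

lemma PA_end (m : ℕ) (hm : 2 ≤ m) : ∀ (b : Bool) (σ : List (Fin m ⊕ Fin m)), PA m b σ →
    (∀ u : Fin m ⊕ Fin m, u ∈ σ) →
    colOrd (joinKE m m) σ ≤ 2 * m - 1 := by
  rintro b σ ⟨hnd, -, hidx⟩ hfull
  rw [colOrd_le_iff]
  intro v
  obtain ⟨j, hj⟩ := List.mem_iff_get.mp (hfull v)
  cases hb : v.isLeft
  · -- right vertex: backDeg ≤ m
    have h1 := backDeg_le_nbr_card (joinKE m m) σ v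
    have h2 : (Finset.univ.filter (fun u => (joinKE m m).Adj v u)).card ≤ m := by
      have hsub : (Finset.univ.filter (fun u => (joinKE m m).Adj v u)) ⊆
          (Finset.univ.filter (fun u : Fin m ⊕ Fin m => u.isLeft = true)) := by
        intro u hu
        rw [Finset.mem_filter] at hu ⊢
        refine ⟨Finset.mem_univ _, ?_⟩
        exact joinKE_isLeft_of_adj_right v u (by cases v <;> simp_all) hu.2
      calc _ ≤ _ := Finset.card_le_card hsub
        _ = m := card_isLeft m m
    omega
  · -- left vertex
    have h1 : backDeg (joinKE m m) σ v ≤ (j : ℕ) := by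
      rw [← hj]
      exact backDeg_le_index _ σ hnd j
    have h2 : (j : ℕ) + 2 ≤ 2 * m := hidx j (by rw [hj]; exact hb)
    omega

/-- Bob's invariant for the lower bound. -/
def QB (m : ℕ) (b : Bool) (σ : List (Fin m ⊕ Fin m)) : Prop :=
  σ.Nodup ∧ (b = true ↔ σ.length % 2 = 0) ∧
  (σ.length ≤ 2 * σ.countP (fun v => v.isRight) + (bif b then 1 else 2) ∨
    ∀ w : Fin m ⊕ Fin m, w.isRight = true → w ∈ σ) ∧
  (2 * m - 1 ≤ σ.length → m - 1 ≤ (σ.take (2 * m - 2)).countP (fun v => v.isRight))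

lemma take_snoc_prefix {m : ℕ} (σ : List (Fin m ⊕ Fin m)) (v : Fin m ⊕ Fin m)
    (h : 2 * m - 2 ≤ σ.length) :
    ((σ ++ [v]).take (2 * m - 2)) = σ.take (2 * m - 2) :=
  List.take_append_of_le_length h

lemma rIn_ge_of_all {m : ℕ} (σ : List (Fin m ⊕ Fin m)) (hnd : σ.Nodup)
    (h : ∀ w : Fin m ⊕ Fin m, w.isRight = true → w ∈ σ) :
    σ.countP (fun v => v.isRight) = m := by
  rw [countP_eq_of_all_mem (fun v : Fin m ⊕ Fin m => v.isRight) σ hnd h, card_isRight]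

lemma QB_A (m : ℕ) (hm : 2 ≤ m) : ∀ σ : List (Fin m ⊕ Fin m), QB m true σ →
    ∀ v : Fin m ⊕ Fin m, v ∉ σ → QB m false (σ ++ [v]) := by
  rintro σ ⟨hnd, hpar, hcnt, hpre⟩ v hv
  have hpar' : σ.length % 2 = 0 := hpar.mp rfl
  refine ⟨nodup_append_single σ v hnd hv, by simp; omega, ?_, ?_⟩
  · rcases hcnt with h | h
    · left
      rw [countP_snoc]
      simp only [List.length_append, List.length_singleton, cond_true] at h ⊢
      cases hb : v.isRight <;> simp <;> omega
    · right
      intro w hw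
      rw [List.mem_append]
      exact Or.inl (h w hw)
  · intro hlen
    rw [List.length_append, List.length_singleton] at hlen
    rcases Nat.lt_or_ge σ.length (2 * m - 1) with h | h
    · -- σ.length = 2m - 2
      have hle : σ.length = 2 * m - 2 := by omega
      rw [take_snoc_prefix σ v (by omega)]
      have hts : σ.take (2 * m - 2) = σ := by rw [← hle]; exact List.take_length (l := σ)
      rw [hts]
      rcases hcnt with h' | h'
      · simp only [cond_true] at h'
        omega
      · rw [rIn_ge_of_all σ hnd h']
        omega
    · rw [take_snoc_prefix σ v (by omega)]
      exact hpre h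

lemma QB_B (m : ℕ) (hm : 2 ≤ m) : ∀ σ : List (Fin m ⊕ Fin m), QB m false σ →
    (∃ u : Fin m ⊕ Fin m, u ∉ σ) →
    ∃ v, v ∉ σ ∧ QB m true (σ ++ [v]) := by
  rintro σ ⟨hnd, hpar, hcnt, hpre⟩ hne
  have hpar' : σ.length % 2 = 1 := by
    have := hpar.symm
    simp only [Bool.false_eq_true, iff_false] at this
    omega
  have hpre' : 2 * m - 1 ≤ σ.length + 1 → m - 1 ≤ (σ.take (2 * m - 2)).countP
      (fun v => v.isRight) := by
    intro hlen
    apply hpre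
    omega
  rcases Classical.em (∃ w : Fin m ⊕ Fin m, w.isRight = true ∧ w ∉ σ) with hex | hex
  · obtain ⟨w, hwr, hw⟩ := hex
    refine ⟨w, hw, nodup_append_single σ w hnd hw, by simp; omega, ?_, ?_⟩
    · left
      rw [countP_snoc, hwr]
      simp only [List.length_append, List.length_singleton, cond_true]
      rcases hcnt with h | h
      · simp only [cond_false] at h
        omega
      · exact absurd (h w hwr) hw
    · intro hlen
      rw [List.length_append, List.length_singleton] at hlen
      rw [take_snoc_prefix σ w (by omega)]
      exact hpre' hlen
  · push_neg at hex
    obtain ⟨v, hvmem⟩ := hne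
    refine ⟨v, hvmem, nodup_append_single σ v hnd hvmem, by simp; omega, ?_, ?_⟩
    · right
      intro w hw
      rw [List.mem_append]
      exact Or.inl (hex w hw)
    · intro hlen
      rw [List.length_append, List.length_singleton] at hlen
      rw [take_snoc_prefix σ v (by omega)]
      exact hpre' hlen

lemma QB_end (m : ℕ) (hm : 2 ≤ m) : ∀ (b : Bool) (σ : List (Fin m ⊕ Fin m)), QB m b σ →
    (∀ u : Fin m ⊕ Fin m, u ∈ σ) →
    2 * m - 1 ≤ colOrd (joinKE m m) σ := by
  rintro b σ ⟨hnd, -, -, hpre⟩ hfull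
  have hlen : σ.length = 2 * m := length_of_full σ hnd hfull
  have hrt : m - 1 ≤ (σ.take (2 * m - 2)).countP (fun v => v.isRight) := by
    apply hpre
    omega
  -- count lefts in the prefix
  have hLR : (fun a : Fin m ⊕ Fin m => decide ¬(a.isRight = true)) =
      (fun a : Fin m ⊕ Fin m => a.isLeft) := by
    funext a
    cases a <;> simp
  have htlen : (σ.take (2 * m - 2)).length = 2 * m - 2 := by
    rw [List.length_take]
    omega
  have hsplit := List.length_eq_countP_add_countP (fun v : Fin m ⊕ Fin m => v.isRight)
    (l := σ.take (2 * m - 2))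
  rw [hLR, htlen] at hsplit
  have hLt : (σ.take (2 * m - 2)).countP (fun v => v.isLeft) ≤ m - 1 := by omega
  have hLσ : σ.countP (fun v => v.isLeft) = m := by
    rw [countP_eq_of_all_mem (fun v : Fin m ⊕ Fin m => v.isLeft) σ hnd
      (fun w _ => hfull w), card_isLeft]
  have hLd : 0 < (σ.drop (2 * m - 2)).countP (fun v => v.isLeft) := by
    have := List.countP_append (p := fun v : Fin m ⊕ Fin m => v.isLeft)
      (l₁ := σ.take (2 * m - 2)) (l₂ := σ.drop (2 * m - 2))
    rw [List.take_append_drop] at this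
    omega
  obtain ⟨w, hwmem, hwl⟩ := List.countP_pos_iff.mp hLd
  obtain ⟨i, hi⟩ := List.mem_iff_get.mp hwmem
  have hdl : (σ.drop (2 * m - 2)).length = 2 := by
    rw [List.length_drop]
    omega
  have hJ : 2 * m - 2 + (i : ℕ) < σ.length := by
    have := i.2
    omega
  have hgetJ : σ.get ⟨2 * m - 2 + (i : ℕ), hJ⟩ = w := by
    rw [← hi]
    simp only [List.get_eq_getElem, List.getElem_drop]
  have hadj : ∀ i' : Fin σ.length, i' < ⟨2 * m - 2 + (i : ℕ), hJ⟩ →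
      (joinKE m m).Adj (σ.get ⟨2 * m - 2 + (i : ℕ), hJ⟩) (σ.get i') := by
    intro i' hlt
    apply joinKE_adj_of_isLeft
    · rw [hgetJ]; exact hwl
    · intro h
      have := hnd.get_inj_iff.mp h
      rw [this] at hlt
      exact lt_irrefl _ hlt
  have hbd := index_le_backDeg (joinKE m m) σ hnd ⟨2 * m - 2 + (i : ℕ), hJ⟩ hadj
  have hcol := le_colOrd (joinKE m m) σ (σ.get ⟨2 * m - 2 + (i : ℕ), hJ⟩)
  simp only at hbd hcol
  omega

lemma gcol_key (m : ℕ) (hm : 2 ≤ m) : gcol (joinKE m m) = 2 * m - 1 := by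
  apply le_antisymm
  · refine gameVal_le_of_inv (joinKE m m) (2 * m - 1) (PA m) ?_ (PA_B m) ?_ true [] ?_
    · intro σ hP hne
      apply PA_A m σ hP
      obtain ⟨v, hv⟩ := hne
      simp only [Finset.mem_filter] at hv
      exact ⟨v, hv.2⟩
    · intro b σ hP hne
      apply PA_end m hm b σ hP
      intro u
      by_contra h
      refine hne ⟨u, ?_⟩
      simp only [Finset.mem_filter]
      exact ⟨Finset.mem_univ _, h⟩
    · refine ⟨List.nodup_nil, Or.inr (by simp), ?_⟩
      rintro ⟨j, hj⟩
      simp at hj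
  · refine le_gameVal_of_inv (joinKE m m) (2 * m - 1) (QB m) (QB_A m hm) ?_ ?_ true [] ?_
    · intro σ hQ hne
      apply QB_B m hm σ hQ
      obtain ⟨v, hv⟩ := hne
      simp only [Finset.mem_filter] at hv
      exact ⟨v, hv.2⟩
    · intro b σ hQ hne
      apply QB_end m hm b σ hQ
      intro u
      by_contra h
      refine hne ⟨u, ?_⟩
      simp only [Finset.mem_filter]
      exact ⟨Finset.mem_univ _, h⟩
    · refine ⟨List.nodup_nil, by simp, Or.inl (by simp), ?_⟩
      intro h
      simp at h
      omega

end Main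
/-- For every `m ≥ 2`, `gcol(K_m ∨ K̄_m) = 2m − 1`; in
particular, `gcol(K_2 ∨ K̄_2) = 3`. -/
theorem gcol_joinKE_self (m : ℕ) (hm : 2 ≤ m) :
    gcol (joinKE m m) = 2 * m - 1 ∧ gcol (joinKE 2 2) = 3 := by
  refine ⟨gcol_key m hm, ?_⟩
  have := gcol_key 2 le_rfl
  norm_num at this
  exact this
end

section
/- Let G be a finite simple graph. The value of the Bob-skip ordering game on G equals gcol(G); in particular, Bob cannot force a score larger than gcol(G) by skipping any number of his turns. -/
open scoped Classical

section Helpers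
variable {V : Type*} [Fintype V] (G : SimpleGraph V)

lemma backDeg_mono {τ τ' : List V} (h : List.Sublist τ τ') (w : V) :
    backDeg G τ w ≤ backDeg G τ' w := by
  obtain ⟨f, hf⟩ := List.sublist_iff_exists_fin_orderEmbedding_get_eq.mp h
  apply Finset.card_le_card
  intro u hu
  simp only [Finset.mem_filter] at hu ⊢
  obtain ⟨-, hadj, i, j, hij, hi, hj⟩ := hu
  exact ⟨Finset.mem_univ _, hadj, f i, f j, f.strictMono hij,
    by rw [← hf i, hi], by rw [← hf j, hj]⟩

lemma colOrd_mono {τ τ' : List V} (h : List.Sublist τ τ') : colOrd G τ ≤ colOrd G τ' := by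
  unfold colOrd
  exact Finset.sup_mono_fun (fun v _ => Nat.add_le_add_left (backDeg_mono G h v) 1)

lemma backDeg_le_degree (τ : List V) (v : V) : backDeg G τ v ≤ G.degree v := by
  rw [← SimpleGraph.card_neighborFinset_eq_degree]
  apply Finset.card_le_card
  intro u hu
  simp only [Finset.mem_filter] at hu
  exact (SimpleGraph.mem_neighborFinset G v u).mpr hu.2.1

lemma sc_le_colOrd_append (σ : List V) (v : V) :
    1 + (G.neighborFinset v ∩ σ.toFinset).card ≤ colOrd G (σ ++ [v]) := by
  have hle : 1 + backDeg G (σ ++ [v]) v ≤ colOrd G (σ ++ [v]) := by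
    unfold colOrd; exact Finset.le_sup (f := fun w => 1 + backDeg G (σ ++ [v]) w) (Finset.mem_univ v)
  have hsub : G.neighborFinset v ∩ σ.toFinset ⊆
      (Finset.univ.filter (fun u =>
        G.Adj v u ∧ ∃ i j : Fin (σ ++ [v]).length, i < j ∧ (σ ++ [v]).get i = u ∧
          (σ ++ [v]).get j = v)) := by
    intro u hu
    rw [Finset.mem_inter, SimpleGraph.mem_neighborFinset, List.mem_toFinset] at hu
    obtain ⟨hadj, hmem⟩ := hu
    obtain ⟨i, hi⟩ := List.mem_iff_get.mp hmem
    have hlen : (σ ++ [v]).length = σ.length + 1 := by simp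
    refine Finset.mem_filter.mpr ⟨Finset.mem_univ _, hadj,
      ⟨i.val, by omega⟩, ⟨σ.length, by omega⟩, by simp [Fin.lt_def], ?_, ?_⟩
    · simp only [List.get_eq_getElem]
      rw [List.getElem_append_left i.isLt]
      simpa using hi
    · simp only [List.get_eq_getElem]
      simp
  calc 1 + (G.neighborFinset v ∩ σ.toFinset).card
      ≤ 1 + backDeg G (σ ++ [v]) v := Nat.add_le_add_left (Finset.card_le_card hsub) 1
    _ ≤ colOrd G (σ ++ [v]) := hle

lemma colOrd_append_single_le (ρ : List V) (v : V) :
    colOrd G (ρ ++ [v]) ≤ max (colOrd G ρ) (1 + (G.neighborFinset v ∩ ρ.toFinset).card) := by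
  unfold colOrd
  apply Finset.sup_le
  intro w _
  by_cases hw : w = v
  · subst hw
    refine le_max_of_le_right (Nat.add_le_add_left (Finset.card_le_card ?_) 1)
    intro u hu
    simp only [Finset.mem_filter] at hu
    obtain ⟨-, hadj, i, j, hij, hi, hj⟩ := hu
    rw [Finset.mem_inter, SimpleGraph.mem_neighborFinset, List.mem_toFinset]
    refine ⟨hadj, ?_⟩
    have hmem : u ∈ ρ ++ [w] := List.mem_iff_get.mpr ⟨i, hi⟩
    rcases List.mem_append.mp hmem with h | h
    · exact h
    · exfalso; exact (G.ne_of_adj hadj).symm (by simpa using h)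
  · refine le_max_of_le_left ?_
    refine le_trans (Nat.add_le_add_left (Finset.card_le_card ?_) 1)
      (Finset.le_sup (f := fun w => 1 + backDeg G ρ w) (Finset.mem_univ w))
    intro u hu
    simp only [Finset.mem_filter] at hu ⊢
    obtain ⟨-, hadj, i, j, hij, hi, hj⟩ := hu
    have hlen : (ρ ++ [v]).length = ρ.length + 1 := by simp
    have hjlt : j.val < ρ.length := by
      rcases Nat.lt_or_ge j.val ρ.length with h | h
      · exact h
      · exfalso
        have : j.val = ρ.length := by omega
        apply hw
        rw [← hj]
        simp only [List.get_eq_getElem]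
        rw [List.getElem_append_right (by omega)]
        simp [this]
    have hilt : i.val < ρ.length := lt_trans hij hjlt
    refine ⟨Finset.mem_univ _, hadj, ⟨i.val, hilt⟩, ⟨j.val, hjlt⟩, hij, ?_, ?_⟩
    · rw [← hi]; simp only [List.get_eq_getElem]
      rw [List.getElem_append_left hilt]
    · rw [← hj]; simp only [List.get_eq_getElem]
      rw [List.getElem_append_left hjlt]

end Helpers

/-- The minimax value of the Bob-skip ordering game on `G` from position `σ`:
played like the ordering game, except that on any of his turns Bob may pass
(order no vertex) instead of choosing a vertex, after which it is Alice's
turn.  Alice minimizes and Bob maximizes the final score `colOrd G τ`. -/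
noncomputable def gameValBobSkip {V : Type*} [Fintype V] (G : SimpleGraph V)
    (alice : Bool) (σ : List V) : ℕ :=
  if h : (Finset.univ.filter (fun v : V => v ∉ σ)).Nonempty then
    if alice then
      (Finset.univ.filter (fun v : V => v ∉ σ)).attach.inf'
        (Finset.attach_nonempty_iff.mpr h)
        (fun v => gameValBobSkip G false (σ ++ [v.1]))
    else
      max (gameValBobSkip G true σ)
        ((Finset.univ.filter (fun v : V => v ∉ σ)).attach.sup'
          (Finset.attach_nonempty_iff.mpr h)
          (fun v => gameValBobSkip G true (σ ++ [v.1])))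
  else colOrd G σ
termination_by ((Finset.univ.filter (fun v : V => v ∉ σ)).card, if alice then 0 else 1)
decreasing_by
  · apply Prod.Lex.left
    have hv : ↑v ∉ σ := (Finset.mem_filter.mp v.2).2
    apply Finset.card_lt_card
    constructor
    · intro u hu
      simp only [Finset.mem_filter, List.mem_append] at hu ⊢
      exact ⟨hu.1, fun h' => hu.2 (Or.inl h')⟩
    · intro hsub
      have := hsub (Finset.mem_filter.mpr ⟨Finset.mem_univ _, hv⟩)
      simp at this
  · apply Prod.Lex.right' <;> simp_all
  · apply Prod.Lex.left
    have hv : ↑v ∉ σ := (Finset.mem_filter.mp v.2).2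
    apply Finset.card_lt_card
    constructor
    · intro u hu
      simp only [Finset.mem_filter, List.mem_append] at hu ⊢
      exact ⟨hu.1, fun h' => hu.2 (Or.inl h')⟩
    · intro hsub
      have := hsub (Finset.mem_filter.mpr ⟨Finset.mem_univ _, hv⟩)
      simp at this


section Main
variable {V : Type*} [Fintype V] (G : SimpleGraph V)

local notation "unp" σ => Finset.univ.filter (fun v : V => v ∉ σ)

lemma gameVal_of_empty {σ : List V} (h : ¬ (unp σ).Nonempty) (a : Bool) :
    gameVal G a σ = colOrd G σ := by
  rw [gameVal]
  exact dif_neg h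

lemma gameVal_true_eq {σ : List V} (h : (unp σ).Nonempty) :
    gameVal G true σ = (unp σ).attach.inf'
      (Finset.attach_nonempty_iff.mpr h) (fun v => gameVal G false (σ ++ [v.1])) := by
  rw [gameVal]
  rw [dif_pos h]
  rfl

lemma gameVal_false_eq {σ : List V} (h : (unp σ).Nonempty) :
    gameVal G false σ = (unp σ).attach.sup'
      (Finset.attach_nonempty_iff.mpr h) (fun v => gameVal G true (σ ++ [v.1])) := by
  rw [gameVal]
  rw [dif_pos h]
  rfl

lemma unp_append {σ : List V} {v : V} (hv : v ∉ σ) :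
    (unp (σ ++ [v])) = (unp σ).erase v := by
  ext u
  simp only [Finset.mem_filter, Finset.mem_erase, Finset.mem_univ, true_and,
    List.mem_append, List.mem_singleton]
  tauto

lemma unp_card_append {σ : List V} {v : V} (hv : v ∉ σ) :
    (unp σ).card = (unp (σ ++ [v])).card + 1 := by
  rw [unp_append hv]
  rw [Finset.card_erase_of_mem (by simp [hv])]
  have : 0 < (unp σ).card := Finset.card_pos.mpr ⟨v, by simp [hv]⟩
  omega


lemma unp_congr {σ ρ : List V} (h : σ.toFinset = ρ.toFinset) : (unp σ) = (unp ρ) := by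
  ext u
  have : u ∈ σ ↔ u ∈ ρ := by rw [← List.mem_toFinset, h, List.mem_toFinset]
  simp [this]

lemma colOrd_le_gameVal (a : Bool) (σ : List V) : colOrd G σ ≤ gameVal G a σ := by
  suffices H : ∀ (n : ℕ) (a : Bool) (σ : List V), (unp σ).card ≤ n →
      colOrd G σ ≤ gameVal G a σ from H _ a σ le_rfl
  intro n
  induction n with
  | zero =>
    intro a σ hn
    have h : ¬ (unp σ).Nonempty := by
      rw [Finset.nonempty_iff_ne_empty]
      simp only [ne_eq, not_not]
      exact Finset.card_eq_zero.mp (Nat.le_zero.mp hn)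
    rw [gameVal_of_empty G h]
  | succ n ih =>
    intro a σ hn
    by_cases h : (unp σ).Nonempty
    · obtain ⟨v0, hv0⟩ := h
      have h : (unp σ).Nonempty := ⟨v0, hv0⟩
      have hv0' : v0 ∉ σ := (Finset.mem_filter.mp hv0).2
      cases a with
      | false =>
        rw [gameVal_false_eq G h]
        have hcard : (unp (σ ++ [v0])).card ≤ n := by
          have := unp_card_append (V := V) hv0'
          omega
        calc colOrd G σ ≤ colOrd G (σ ++ [v0]) :=
              colOrd_mono G (List.sublist_append_left σ [v0])
          _ ≤ gameVal G true (σ ++ [v0]) := ih true _ hcard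
          _ ≤ _ := Finset.le_sup'
              (fun v : {x // x ∈ (unp σ)} => gameVal G true (σ ++ [v.1]))
              (Finset.mem_attach _ ⟨v0, hv0⟩)
      | true =>
        rw [gameVal_true_eq G h]
        apply Finset.le_inf'
        rintro ⟨v, hv⟩ -
        have hv' : v ∉ σ := (Finset.mem_filter.mp hv).2
        have hcard : (unp (σ ++ [v])).card ≤ n := by
          have := unp_card_append (V := V) hv'
          omega
        calc colOrd G σ ≤ colOrd G (σ ++ [v]) :=
              colOrd_mono G (List.sublist_append_left σ [v])
          _ ≤ gameVal G false (σ ++ [v]) := ih false _ hcard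
    · rw [gameVal_of_empty G h]

lemma exists_degree_le_gameVal (a : Bool) (σ : List V) (hne : (unp σ).Nonempty) :
    ∃ b ∈ (unp σ), 1 + G.degree b ≤ gameVal G a σ := by
  suffices H : ∀ (n : ℕ) (a : Bool) (σ : List V), (unp σ).card ≤ n → (unp σ).Nonempty →
      ∃ b ∈ (unp σ), 1 + G.degree b ≤ gameVal G a σ from H _ a σ le_rfl hne
  clear hne a σ
  intro n
  induction n with
  | zero =>
    intro a σ hn hne
    exact absurd (Finset.card_pos.mpr hne) (by omega)
  | succ n ih =>
    intro a σ hn hne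
    -- get a vertex v with gameVal G (!a) (σ ++ [v]) ≤ gameVal G a σ and v unplaced
    have key : ∃ v ∈ (unp σ), gameVal G (!a) (σ ++ [v]) ≤ gameVal G a σ := by
      cases a with
      | true =>
        simp only [Bool.not_true]
        rw [gameVal_true_eq G hne]
        obtain ⟨v, hv, heq⟩ := Finset.exists_mem_eq_inf'
          (Finset.attach_nonempty_iff.mpr hne)
          (fun v : {x // x ∈ (unp σ)} => gameVal G false (σ ++ [v.1]))
        exact ⟨v.1, v.2, le_of_eq heq.symm⟩
      | false =>
        simp only [Bool.not_false]
        rw [gameVal_false_eq G hne]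
        obtain ⟨v0, hv0⟩ := hne
        exact ⟨v0, hv0, Finset.le_sup'
          (fun v : {x // x ∈ (unp σ)} => gameVal G true (σ ++ [v.1]))
          (Finset.mem_attach _ ⟨v0, hv0⟩)⟩
    obtain ⟨v, hv, hle⟩ := key
    have hv' : v ∉ σ := (Finset.mem_filter.mp hv).2
    by_cases h2 : (unp (σ ++ [v])).Nonempty
    · have hcard : (unp (σ ++ [v])).card ≤ n := by
        have := unp_card_append (V := V) hv'
        omega
      obtain ⟨b, hb, hble⟩ := ih (!a) (σ ++ [v]) hcard h2
      refine ⟨b, ?_, le_trans hble hle⟩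
      rw [unp_append hv'] at hb
      exact Finset.mem_of_mem_erase hb
    · -- σ ++ [v] is complete: degree bound via last vertex
      refine ⟨v, hv, ?_⟩
      have hval : gameVal G (!a) (σ ++ [v]) = colOrd G (σ ++ [v]) := gameVal_of_empty G h2 _
      have hnb : G.neighborFinset v ⊆ σ.toFinset := by
        intro u hu
        have hu' : u ≠ v := G.ne_of_adj ((SimpleGraph.mem_neighborFinset G v u).mp hu) |>.symm
        have : u ∈ σ ++ [v] := by
          by_contra hcon
          exact h2 ⟨u, Finset.mem_filter.mpr ⟨Finset.mem_univ _, hcon⟩⟩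
        rw [List.mem_toFinset]
        rcases List.mem_append.mp this with h' | h'
        · exact h'
        · exact absurd (by simpa using h') hu'
      have : G.neighborFinset v ∩ σ.toFinset = G.neighborFinset v :=
        Finset.inter_eq_left.mpr hnb
      have hdeg : 1 + G.degree v ≤ colOrd G (σ ++ [v]) := by
        have := sc_le_colOrd_append G σ v
        rwa [Finset.inter_eq_left.mpr hnb, SimpleGraph.card_neighborFinset_eq_degree] at this
      omega

lemma gameVal_le_of_toFinset_eq (a : Bool) {σ ρ : List V} (h : σ.toFinset = ρ.toFinset) :
    gameVal G a ρ ≤ max (gameVal G a σ) (colOrd G ρ) := by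
  suffices H : ∀ (n : ℕ) (a : Bool) (σ ρ : List V), (unp σ).card ≤ n →
      σ.toFinset = ρ.toFinset → gameVal G a ρ ≤ max (gameVal G a σ) (colOrd G ρ) from
    H _ a σ ρ le_rfl h
  clear h a σ ρ
  intro n
  induction n with
  | zero =>
    intro a σ ρ hn h
    have hu : (unp σ) = (unp ρ) := unp_congr h
    have hσ : ¬ (unp σ).Nonempty := by
      rw [Finset.nonempty_iff_ne_empty]
      simp only [ne_eq, not_not]
      exact Finset.card_eq_zero.mp (Nat.le_zero.mp hn)
    have hρ : ¬ (unp ρ).Nonempty := hu ▸ hσ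
    rw [gameVal_of_empty G hρ]
    exact le_max_right _ _
  | succ n ih =>
    intro a σ ρ hn h
    have hu : (unp σ) = (unp ρ) := unp_congr h
    by_cases hσ : (unp σ).Nonempty
    · have hρ : (unp ρ).Nonempty := hu ▸ hσ
      cases a with
      | true =>
        obtain ⟨v, hv, heq⟩ := Finset.exists_mem_eq_inf'
          (Finset.attach_nonempty_iff.mpr hσ)
          (fun v : {x // x ∈ (unp σ)} => gameVal G false (σ ++ [v.1]))
        have hvσ : v.1 ∉ σ := (Finset.mem_filter.mp v.2).2
        have hvρmem : v.1 ∈ (unp ρ) := hu ▸ v.2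
        have hcard : (unp (σ ++ [v.1])).card ≤ n := by
          have := unp_card_append (V := V) hvσ
          omega
        have hts : (σ ++ [v.1]).toFinset = (ρ ++ [v.1]).toFinset := by
          simp [h]
        have step1 : gameVal G true ρ ≤ gameVal G false (ρ ++ [v.1]) := by
          rw [gameVal_true_eq G hρ]
          exact Finset.inf'_le _ (Finset.mem_attach _ ⟨v.1, hvρmem⟩)
        have step2 := ih false (σ ++ [v.1]) (ρ ++ [v.1]) hcard hts
        have step3 : colOrd G (ρ ++ [v.1]) ≤
            max (colOrd G ρ) (gameVal G false (σ ++ [v.1])) := by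
          have h1 := colOrd_append_single_le G ρ v.1
          have h2 : (G.neighborFinset v.1 ∩ ρ.toFinset) =
              (G.neighborFinset v.1 ∩ σ.toFinset) := by rw [h]
          have h3 := sc_le_colOrd_append G σ v.1
          have h4 := colOrd_le_gameVal G false (σ ++ [v.1])
          rw [h2] at h1
          omega
        have hval : gameVal G true σ = gameVal G false (σ ++ [v.1]) := by
          rw [gameVal_true_eq G hσ]
          exact heq
        rw [hval]
        omega
      | false =>
        rw [gameVal_false_eq G hρ]
        apply Finset.sup'_le
        rintro ⟨w, hwρ⟩ -
        show gameVal G true (ρ ++ [w]) ≤ _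
        have hwσmem : w ∈ (unp σ) := hu ▸ hwρ
        have hwσ : w ∉ σ := (Finset.mem_filter.mp hwσmem).2
        have hcard : (unp (σ ++ [w])).card ≤ n := by
          have := unp_card_append (V := V) hwσ
          omega
        have hts : (σ ++ [w]).toFinset = (ρ ++ [w]).toFinset := by simp [h]
        have step2 := ih true (σ ++ [w]) (ρ ++ [w]) hcard hts
        have step3 : colOrd G (ρ ++ [w]) ≤
            max (colOrd G ρ) (gameVal G true (σ ++ [w])) := by
          have h1 := colOrd_append_single_le G ρ w
          have h2 : (G.neighborFinset w ∩ ρ.toFinset) =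
              (G.neighborFinset w ∩ σ.toFinset) := by rw [h]
          have h3 := sc_le_colOrd_append G σ w
          have h4 := colOrd_le_gameVal G true (σ ++ [w])
          rw [h2] at h1
          omega
        have step4 : gameVal G true (σ ++ [w]) ≤ gameVal G false σ := by
          rw [gameVal_false_eq G hσ]
          exact Finset.le_sup'
            (fun v : {x // x ∈ (unp σ)} => gameVal G true (σ ++ [v.1]))
            (Finset.mem_attach _ ⟨w, hwσmem⟩)
        omega
    · have hρ : ¬ (unp ρ).Nonempty := hu ▸ hσ
      rw [gameVal_of_empty G hρ]
      exact le_max_right _ _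


lemma main_AB : ∀ n : ℕ,
    (∀ σ : List V, (unp σ).card ≤ n → gameVal G true σ ≤ gameVal G false σ) ∧
    (∀ (σ₁ σ₂ : List V) (b : V) (K : ℕ), (unp (σ₁ ++ σ₂)).card ≤ n →
      b ∉ σ₁ ++ σ₂ → 1 + G.degree b ≤ K →
      gameVal G false (σ₁ ++ [b] ++ σ₂) ≤ K → gameVal G false (σ₁ ++ σ₂) ≤ K) := by
  intro n
  induction n with
  | zero =>
    constructor
    · intro σ hn
      have h : ¬ (unp σ).Nonempty := by
        rw [Finset.nonempty_iff_ne_empty]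
        simp only [ne_eq, not_not]
        exact Finset.card_eq_zero.mp (Nat.le_zero.mp hn)
      rw [gameVal_of_empty G h, gameVal_of_empty G h]
    · intro σ₁ σ₂ b K hn hb hdeg hK
      exfalso
      have : b ∈ (unp (σ₁ ++ σ₂)) := Finset.mem_filter.mpr ⟨Finset.mem_univ _, hb⟩
      have := Finset.card_pos.mpr ⟨b, this⟩
      omega
  | succ n ih =>
    obtain ⟨ihA, ihB⟩ := ih
    constructor
    · -- Claim A
      intro σ hn
      by_cases hne : (unp σ).Nonempty
      · set K := gameVal G false σ with hKdef
        obtain ⟨b, hbmem, hdeg⟩ := exists_degree_le_gameVal G false σ hne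
        have hb : b ∉ σ := (Finset.mem_filter.mp hbmem).2
        have hKb : gameVal G true (σ ++ [b]) ≤ K := by
          rw [hKdef, gameVal_false_eq G hne]
          exact Finset.le_sup'
            (fun v : {x // x ∈ (unp σ)} => gameVal G true (σ ++ [v.1]))
            (Finset.mem_attach _ ⟨b, hbmem⟩)
        by_cases h2 : (unp (σ ++ [b])).Nonempty
        · obtain ⟨u, humem, hueq⟩ := Finset.exists_mem_eq_inf'
            (Finset.attach_nonempty_iff.mpr h2)
            (fun v : {x // x ∈ (unp (σ ++ [b]))} => gameVal G false ((σ ++ [b]) ++ [v.1]))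
          have hvalu : gameVal G false ((σ ++ [b]) ++ [u.1]) ≤ K := by
            rw [← hueq, ← gameVal_true_eq G h2]
            exact hKb
          have huσb : u.1 ∉ σ ++ [b] := (Finset.mem_filter.mp u.2).2
          have huσ : u.1 ∉ σ := fun h => huσb (List.mem_append.mpr (Or.inl h))
          have hub : u.1 ≠ b := by
            intro h
            exact huσb (List.mem_append.mpr (Or.inr (by simp [h])))
          have humemσ : u.1 ∈ (unp σ) := Finset.mem_filter.mpr ⟨Finset.mem_univ _, huσ⟩
          have step : gameVal G true σ ≤ gameVal G false (σ ++ [u.1]) := by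
            rw [gameVal_true_eq G hne]
            exact Finset.inf'_le
              (fun v : {x // x ∈ (unp σ)} => gameVal G false (σ ++ [v.1]))
              (Finset.mem_attach _ ⟨u.1, humemσ⟩)
          refine le_trans step (ihB σ [u.1] b K ?_ ?_ hdeg ?_)
          · have := unp_card_append (V := V) huσ
            omega
          · simp only [List.mem_append, List.mem_singleton]
            push_neg
            exact ⟨hb, fun h => hub h.symm⟩
          · simpa only [List.append_assoc] using hvalu
        · have step : gameVal G true σ ≤ gameVal G false (σ ++ [b]) := by
            rw [gameVal_true_eq G hne]
            exact Finset.inf'_le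
              (fun v : {x // x ∈ (unp σ)} => gameVal G false (σ ++ [v.1]))
              (Finset.mem_attach _ ⟨b, hbmem⟩)
          rw [gameVal_of_empty G h2] at step hKb
          exact le_trans step hKb
      · rw [gameVal_of_empty G hne, gameVal_of_empty G hne]
    · -- Claim B
      intro σ₁ σ₂ b K hn hb hdeg hK
      set σ : List V := σ₁ ++ σ₂ with hσdef
      set σ' : List V := σ₁ ++ [b] ++ σ₂ with hσ'def
      clear_value σ σ'
      have hbσ' : b ∈ σ' := by simp [hσ'def]
      have hsub : List.Sublist σ σ' := by
        rw [hσdef, hσ'def, List.append_assoc]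
        exact (List.sublist_cons_self b σ₂).append_left σ₁
      have hts : σ'.toFinset = (σ ++ [b]).toFinset := by
        ext u
        simp only [List.mem_toFinset, hσ'def, hσdef, List.mem_append, List.mem_singleton]
        tauto
      have hbneσ : (unp σ).Nonempty :=
        ⟨b, Finset.mem_filter.mpr ⟨Finset.mem_univ _, hb⟩⟩
      have hEσ' : colOrd G σ' ≤ K := le_trans (colOrd_le_gameVal G false σ') hK
      have hscb : 1 + (G.neighborFinset b ∩ σ.toFinset).card ≤ K := by
        have hsub2 : (G.neighborFinset b ∩ σ.toFinset).card ≤ G.degree b := by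
          rw [← SimpleGraph.card_neighborFinset_eq_degree]
          exact Finset.card_le_card (Finset.inter_subset_left)
        omega
      rw [gameVal_false_eq G hbneσ]
      apply Finset.sup'_le
      rintro ⟨x, hxmem⟩ -
      show gameVal G true (σ ++ [x]) ≤ K
      have hxσ : x ∉ σ := (Finset.mem_filter.mp hxmem).2
      by_cases hxb : x = b
      · subst hxb
        have hcard : (unp (σ ++ [x])).card ≤ n := by
          have := unp_card_append (V := V) hxσ
          omega
        have hA := ihA (σ ++ [x]) hcard
        have hVAL := gameVal_le_of_toFinset_eq G false (σ := σ') (ρ := σ ++ [x]) hts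
        have hco : colOrd G (σ ++ [x]) ≤
            max (colOrd G σ) (1 + (G.neighborFinset x ∩ σ.toFinset).card) :=
          colOrd_append_single_le G σ x
        have hmono : colOrd G σ ≤ colOrd G σ' := colOrd_mono G hsub
        omega
      · -- x ≠ b
        have hxσ' : x ∉ σ' := by
          intro hmem
          simp only [hσ'def, List.mem_append, List.mem_singleton] at hmem
          simp only [hσdef, List.mem_append] at hxσ
          tauto
        have hσ'ne : (unp σ').Nonempty :=
          ⟨x, Finset.mem_filter.mpr ⟨Finset.mem_univ _, hxσ'⟩⟩
        have hKx : gameVal G true (σ' ++ [x]) ≤ K := by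
          rw [gameVal_false_eq G hσ'ne] at hK
          refine le_trans ?_ hK
          exact Finset.le_sup'
            (fun v : {y // y ∈ (unp σ')} => gameVal G true (σ' ++ [v.1]))
            (Finset.mem_attach _ ⟨x, Finset.mem_filter.mpr ⟨Finset.mem_univ _, hxσ'⟩⟩)
        have hbσx : b ∉ σ ++ [x] := by
          simp only [List.mem_append, List.mem_singleton]
          push_neg
          exact ⟨hb, fun h => hxb h.symm⟩
        by_cases h2 : (unp (σ' ++ [x])).Nonempty
        · have hreach : ∃ w : V, w ∉ σ' ++ [x] ∧
              gameVal G false ((σ' ++ [x]) ++ [w]) ≤ K := by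
            obtain ⟨u, humem, hueq⟩ := Finset.exists_mem_eq_inf'
              (Finset.attach_nonempty_iff.mpr h2)
              (fun v : {y // y ∈ (unp (σ' ++ [x]))} => gameVal G false ((σ' ++ [x]) ++ [v.1]))
            refine ⟨u.1, (Finset.mem_filter.mp u.2).2, ?_⟩
            rw [← hueq, ← gameVal_true_eq G h2]
            exact hKx
          obtain ⟨u, huσ'x, hvalu⟩ := hreach
          have huσx : u ∉ σ ++ [x] := by
            intro hmem
            apply huσ'x
            simp only [hσdef, List.mem_append, List.mem_singleton] at hmem
            simp only [hσ'def, List.mem_append, List.mem_singleton]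
            tauto
          have hub : u ≠ b := by
            intro h
            exact huσ'x (List.mem_append.mpr (Or.inl (h ▸ hbσ')))
          have hstep : gameVal G true (σ ++ [x]) ≤ gameVal G false ((σ ++ [x]) ++ [u]) := by
            have hnex : (unp (σ ++ [x])).Nonempty :=
              ⟨u, Finset.mem_filter.mpr ⟨Finset.mem_univ _, huσx⟩⟩
            rw [gameVal_true_eq G hnex]
            exact Finset.inf'_le
              (fun v : {y // y ∈ (unp (σ ++ [x]))} => gameVal G false ((σ ++ [x]) ++ [v.1]))
              (Finset.mem_attach _ ⟨u, Finset.mem_filter.mpr ⟨Finset.mem_univ _, huσx⟩⟩)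
          have hc1 : (unp (σ₁ ++ (σ₂ ++ [x] ++ [u]))).card ≤ n := by
            have hxcard := unp_card_append (V := V) hxσ
            have hucard := unp_card_append (V := V) huσx
            have heq : (unp (σ₁ ++ (σ₂ ++ [x] ++ [u]))) = (unp ((σ ++ [x]) ++ [u])) := by
              apply unp_congr
              ext w
              simp only [List.mem_toFinset, List.mem_append, hσdef]
              tauto
            rw [heq]
            omega
          have hc2 : b ∉ σ₁ ++ (σ₂ ++ [x] ++ [u]) := by
            have hbx : b ≠ x := fun h => hxb h.symm
            have hbu : b ≠ u := fun h => hub h.symm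
            simp only [hσdef, List.mem_append] at hb
            simp only [List.mem_append, List.mem_singleton]
            tauto
          have hc3 : gameVal G false (σ₁ ++ [b] ++ (σ₂ ++ [x] ++ [u])) ≤ K := by
            have hl : σ₁ ++ [b] ++ (σ₂ ++ [x] ++ [u]) = (σ' ++ [x]) ++ [u] := by
              rw [hσ'def]; simp [List.append_assoc]
            rw [hl]
            exact hvalu
          have hres := ihB σ₁ (σ₂ ++ [x] ++ [u]) b K hc1 hc2 hdeg hc3
          have hl2 : σ₁ ++ (σ₂ ++ [x] ++ [u]) = (σ ++ [x]) ++ [u] := by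
            rw [hσdef]; simp [List.append_assoc]
          rw [hl2] at hres
          exact le_trans hstep hres
        · -- σ' ++ [x] is complete; only b remains unplaced in σ ++ [x]
          have hnex : (unp (σ ++ [x])).Nonempty :=
            ⟨b, Finset.mem_filter.mpr ⟨Finset.mem_univ _, hbσx⟩⟩
          have hstep : gameVal G true (σ ++ [x]) ≤ gameVal G false ((σ ++ [x]) ++ [b]) := by
            rw [gameVal_true_eq G hnex]
            exact Finset.inf'_le
              (fun v : {y // y ∈ (unp (σ ++ [x]))} => gameVal G false ((σ ++ [x]) ++ [v.1]))
              (Finset.mem_attach _ ⟨b, Finset.mem_filter.mpr ⟨Finset.mem_univ _, hbσx⟩⟩)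
          have hempty : ¬ (unp ((σ ++ [x]) ++ [b])).Nonempty := by
            intro hcon
            apply h2
            obtain ⟨w, hw⟩ := hcon
            have hw' : w ∉ (σ ++ [x]) ++ [b] := (Finset.mem_filter.mp hw).2
            refine ⟨w, Finset.mem_filter.mpr ⟨Finset.mem_univ _, fun hmem => hw' ?_⟩⟩
            simp only [hσ'def, List.mem_append, List.mem_singleton] at hmem
            simp only [hσdef, List.mem_append, List.mem_singleton]
            tauto
          rw [gameVal_of_empty G hempty] at hstep
          refine le_trans hstep ?_
          have hco : colOrd G ((σ ++ [x]) ++ [b]) ≤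
              max (colOrd G (σ ++ [x])) (1 + (G.neighborFinset b ∩ (σ ++ [x]).toFinset).card) :=
            colOrd_append_single_le G (σ ++ [x]) b
          have hmono : colOrd G (σ ++ [x]) ≤ colOrd G (σ' ++ [x]) :=
            colOrd_mono G (hsub.append_right [x])
          have hE : colOrd G (σ' ++ [x]) ≤ gameVal G true (σ' ++ [x]) :=
            colOrd_le_gameVal G true (σ' ++ [x])
          have hsc : (G.neighborFinset b ∩ (σ ++ [x]).toFinset).card ≤ G.degree b := by
            rw [← SimpleGraph.card_neighborFinset_eq_degree]
            exact Finset.card_le_card (Finset.inter_subset_left)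
          omega


lemma gameVal_true_le_false (σ : List V) : gameVal G true σ ≤ gameVal G false σ :=
  (main_AB G ((unp σ).card)).1 σ le_rfl

lemma gameValBobSkip_of_empty {σ : List V} (h : ¬ (unp σ).Nonempty) (a : Bool) :
    gameValBobSkip G a σ = colOrd G σ := by
  rw [gameValBobSkip]
  exact dif_neg h

lemma gameValBobSkip_true_eq {σ : List V} (h : (unp σ).Nonempty) :
    gameValBobSkip G true σ = (unp σ).attach.inf'
      (Finset.attach_nonempty_iff.mpr h) (fun v => gameValBobSkip G false (σ ++ [v.1])) := by
  rw [gameValBobSkip]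
  rw [dif_pos h]
  rfl

lemma gameValBobSkip_false_eq {σ : List V} (h : (unp σ).Nonempty) :
    gameValBobSkip G false σ = max (gameValBobSkip G true σ)
      ((unp σ).attach.sup' (Finset.attach_nonempty_iff.mpr h)
        (fun v => gameValBobSkip G true (σ ++ [v.1]))) := by
  rw [gameValBobSkip]
  rw [dif_pos h]
  rfl

lemma bobSkip_eq : ∀ n : ℕ,
    (∀ σ : List V, (unp σ).card ≤ n → gameValBobSkip G true σ = gameVal G true σ) ∧
    (∀ σ : List V, (unp σ).card ≤ n → gameValBobSkip G false σ = gameVal G false σ) := by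
  intro n
  induction n with
  | zero =>
    have hem : ∀ σ : List V, (unp σ).card ≤ 0 → ¬ (unp σ).Nonempty := by
      intro σ hn
      rw [Finset.nonempty_iff_ne_empty]
      simp only [ne_eq, not_not]
      exact Finset.card_eq_zero.mp (Nat.le_zero.mp hn)
    constructor <;> intro σ hn <;>
      rw [gameValBobSkip_of_empty G (hem σ hn), gameVal_of_empty G (hem σ hn)]
  | succ n ih =>
    have htrue : ∀ σ : List V, (unp σ).card ≤ n + 1 →
        gameValBobSkip G true σ = gameVal G true σ := by
      intro σ hn
      by_cases h : (unp σ).Nonempty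
      · rw [gameValBobSkip_true_eq G h, gameVal_true_eq G h]
        apply Finset.inf'_congr _ rfl
        rintro ⟨v, hv⟩ -
        have hv' : v ∉ σ := (Finset.mem_filter.mp hv).2
        have := unp_card_append (V := V) hv'
        exact ih.2 (σ ++ [v]) (by omega)
      · rw [gameValBobSkip_of_empty G h, gameVal_of_empty G h]
    refine ⟨htrue, ?_⟩
    intro σ hn
    by_cases h : (unp σ).Nonempty
    · have h1 : gameValBobSkip G true σ = gameVal G true σ := htrue σ hn
      have h2 : (unp σ).attach.sup' (Finset.attach_nonempty_iff.mpr h)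
          (fun v => gameValBobSkip G true (σ ++ [v.1])) = gameVal G false σ := by
        rw [gameVal_false_eq G h]
        apply Finset.sup'_congr _ rfl
        rintro ⟨v, hv⟩ -
        have hv' : v ∉ σ := (Finset.mem_filter.mp hv).2
        have := unp_card_append (V := V) hv'
        exact ih.1 (σ ++ [v]) (by omega)
      rw [gameValBobSkip_false_eq G h, h1, h2]
      exact max_eq_right (gameVal_true_le_false G σ)
    · rw [gameValBobSkip_of_empty G h, gameVal_of_empty G h]

lemma bobSkip_nil_eq : gameValBobSkip G true ([] : List V) = gameVal G true ([] : List V) :=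
  (bobSkip_eq G ((unp ([] : List V)).card)).1 [] le_rfl

end Main

/-- The value of the Bob-skip ordering game on `G` equals
`gcol(G)`: Bob cannot force a score larger than `gcol(G)` by skipping any
number of his turns. -/
theorem bobSkip_value_eq_gcol {V : Type*} [Fintype V] (G : SimpleGraph V) :
    gameValBobSkip G true [] = gcol G := by
  unfold gcol
  exact bobSkip_nil_eq G
end
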